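/- Let V₁, V₂ be finite-dimensional real vector spaces, ρ₁ : SO(3) → GL(V₁) and ρ₂ : SO(3) → GL(V₂) group homomorphisms, μ a left-invariant Haar measure on the compact group SO(3), κ : SO(3) → Hom(V₁,V₂) continuous, and f : SO(3) → V₁ continuous. Define the group convolution (κ ⋆ f)(R) = ∫_{SO(3)} ρ₂(R) κ(R⁻¹Q) ρ₁(R)⁻¹ f(Q) dμ(Q). Then for every S ∈ SO(3) and every R ∈ SO(3), (κ ⋆ (π₁(S)f))(R) = ρ₂(S)·(κ ⋆ f)(S⁻¹R), where [π₁(S)f](Q) = ρ₁(S) f(S⁻¹Q). -/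

import Mathlib

open Matrix MeasureTheory

noncomputable section

/-- `SO(n)`: the group of `n×n` real orthogonal matrices with determinant `1`, as a subgroup
of the orthogonal group. -/
def SO (n : ℕ) : Subgroup (Matrix.orthogonalGroup (Fin n) ℝ) where
  carrier := {R | (R : Matrix (Fin n) (Fin n) ℝ).det = 1}
  one_mem' := by simp
  mul_mem' := by
    intro a b ha hb
    simp only [Set.mem_setOf_eq, Matrix.UnitaryGroup.mul_val, Matrix.det_mul] at *
    rw [ha, hb, mul_one]
  inv_mem' := by
    intro a ha
    simp only [Set.mem_setOf_eq, Matrix.UnitaryGroup.inv_val] at *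
    rw [Matrix.star_eq_conjTranspose, Matrix.conjTranspose_eq_transpose_of_trivial,
      Matrix.det_transpose]
    exact ha

/-- The matrix underlying an element of `SO(n)`. -/
def SO.mat {n : ℕ} (R : SO n) : Matrix (Fin n) (Fin n) ℝ := R.1.1

/-- The unit sphere `S²` in three-dimensional Euclidean space. -/
abbrev Sphere2 : Type := Metric.sphere (0 : EuclideanSpace ℝ (Fin 3)) 1

theorem norm_mulVec (R : SO 3) (x : EuclideanSpace ℝ (Fin 3)) :
    ‖(show EuclideanSpace ℝ (Fin 3) from WithLp.toLp 2 ((SO.mat R).mulVec x))‖ = ‖x‖ := by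
  have horth : star (SO.mat R) * SO.mat R = 1 := R.1.2.1
  have h : (SO.mat R)ᵀ * SO.mat R = 1 := by
    rwa [Matrix.star_eq_conjTranspose, Matrix.conjTranspose_eq_transpose_of_trivial] at horth
  rw [EuclideanSpace.norm_eq, EuclideanSpace.norm_eq]
  congr 1
  have hd : ∀ (w : Fin 3 → ℝ), (∑ i, ‖w i‖ ^ 2) = w ⬝ᵥ w := by
    intro w
    simp [dotProduct, Real.norm_eq_abs, sq_abs, pow_two]
  rw [hd ((SO.mat R).mulVec x), hd x]
  rw [dotProduct_mulVec]
  congr 1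
  calc ((SO.mat R).mulVec x) ᵥ* SO.mat R = (SO.mat R)ᵀ *ᵥ ((SO.mat R) *ᵥ x) := by
        rw [Matrix.mulVec_transpose]
  _ = ((SO.mat R)ᵀ * SO.mat R) *ᵥ x := by rw [Matrix.mulVec_mulVec]
  _ = x := by rw [h, Matrix.one_mulVec]

/-- The action of `SO(3)` on the unit sphere `S²` by matrix-vector multiplication. -/
def SO.act (R : SO 3) (x : Sphere2) : Sphere2 :=
  ⟨WithLp.toLp 2 ((SO.mat R).mulVec x), by
    rw [mem_sphere_zero_iff_norm]
    exact (norm_mulVec R x).trans (mem_sphere_zero_iff_norm.mp x.2)⟩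

instance : MeasurableSpace (Matrix (Fin 3) (Fin 3) ℝ) := borel _
instance : BorelSpace (Matrix (Fin 3) (Fin 3) ℝ) := ⟨rfl⟩

variable {V₁ V₂ : Type*}
  [NormedAddCommGroup V₁] [NormedSpace ℝ V₁] [FiniteDimensional ℝ V₁]
  [NormedAddCommGroup V₂] [NormedSpace ℝ V₂] [FiniteDimensional ℝ V₂]

/-- The group convolution `(κ ⋆ f)(R) = ∫_{SO(3)} ρ₂(R) κ(R⁻¹Q) ρ₁(R)⁻¹ f(Q) dμ(Q)` of a
kernel `κ : SO(3) → Hom(V₁,V₂)` with a feature map `f : SO(3) → V₁`. -/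
def so3Conv (ρ₁ : SO 3 →* LinearMap.GeneralLinearGroup ℝ V₁)
    (ρ₂ : SO 3 →* LinearMap.GeneralLinearGroup ℝ V₂) (μ : Measure (SO 3))
    (κ : SO 3 → (V₁ →ₗ[ℝ] V₂)) (f : SO 3 → V₁) (R : SO 3) : V₂ :=
  ∫ Q, (ρ₂ R : V₂ →ₗ[ℝ] V₂) (κ (R⁻¹ * Q) ((↑(ρ₁ R)⁻¹ : V₁ →ₗ[ℝ] V₁) (f Q))) ∂μ

/-- No integrability is needed: an invertible map sends non-integrable functions to
non-integrable ones, where both sides are `0`. -/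
theorem LinearMap.GeneralLinearGroup.integral_comp_comm {X E : Type*} [MeasurableSpace X]
    {μ : Measure X} [NormedAddCommGroup E] [NormedSpace ℝ E] [FiniteDimensional ℝ E]
    (A : LinearMap.GeneralLinearGroup ℝ E) (φ : X → E) :
    ∫ x, (A : E →ₗ[ℝ] E) (φ x) ∂μ = (A : E →ₗ[ℝ] E) (∫ x, φ x ∂μ) :=
  (generalLinearEquiv ℝ E A).toContinuousLinearEquiv.integral_comp_comm φ

section GroupConvolution

variable {G W₁ W₂ : Type*} [Group G] [MeasurableSpace G]
  [AddCommGroup W₁] [Module ℝ W₁]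
  [NormedAddCommGroup W₂] [NormedSpace ℝ W₂]

def groupConv (ρ₁ : G →* LinearMap.GeneralLinearGroup ℝ W₁)
    (ρ₂ : G →* LinearMap.GeneralLinearGroup ℝ W₂) (μ : Measure G)
    (κ : G → (W₁ →ₗ[ℝ] W₂)) (f : G → W₁) (R : G) : W₂ :=
  ∫ Q, (ρ₂ R : W₂ →ₗ[ℝ] W₂) (κ (R⁻¹ * Q) ((↑(ρ₁ R)⁻¹ : W₁ →ₗ[ℝ] W₁) (f Q))) ∂μ

theorem groupConv_equivariant [MeasurableMul G] [FiniteDimensional ℝ W₂]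
    (ρ₁ : G →* LinearMap.GeneralLinearGroup ℝ W₁)
    (ρ₂ : G →* LinearMap.GeneralLinearGroup ℝ W₂) (μ : Measure G) [μ.IsMulLeftInvariant]
    (κ : G → (W₁ →ₗ[ℝ] W₂)) (f : G → W₁) (S R : G) :
    groupConv ρ₁ ρ₂ μ κ (fun Q => (ρ₁ S : W₁ →ₗ[ℝ] W₁) (f (S⁻¹ * Q))) R =
      (ρ₂ S : W₂ →ₗ[ℝ] W₂) (groupConv ρ₁ ρ₂ μ κ f (S⁻¹ * R)) := by
  have hρ₂ (w : W₂) :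
      (ρ₂ S : W₂ →ₗ[ℝ] W₂) ((ρ₂ (S⁻¹ * R) : W₂ →ₗ[ℝ] W₂) w) = (ρ₂ R : W₂ →ₗ[ℝ] W₂) w := by
    rw [← Module.End.mul_apply, ← Units.val_mul, ← map_mul, mul_inv_cancel_left]
  have hρ₁ (v : W₁) : (↑(ρ₁ (S⁻¹ * R))⁻¹ : W₁ →ₗ[ℝ] W₁) v =
      (↑(ρ₁ R)⁻¹ : W₁ →ₗ[ℝ] W₁) ((ρ₁ S : W₁ →ₗ[ℝ] W₁) v) := by
    rw [← map_inv, _root_.mul_inv_rev, inv_inv, map_mul, map_inv]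
    rfl
  -- After substituting `Q ↦ S * Q`, the integrand is `ρ₂ S` applied to that of `(κ ⋆ f)(S⁻¹ * R)`.
  rw [groupConv, ← integral_mul_left_eq_self _ S, groupConv,
    ← LinearMap.GeneralLinearGroup.integral_comp_comm]
  congr with Q
  rw [inv_mul_cancel_left, ← mul_assoc, _root_.mul_inv_rev, inv_inv, hρ₂, hρ₁]

end GroupConvolution

theorem so3Conv_equivariant_general
    (ρ₁ : SO 3 →* LinearMap.GeneralLinearGroup ℝ V₁)
    (ρ₂ : SO 3 →* LinearMap.GeneralLinearGroup ℝ V₂)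
    (μ : Measure (SO 3)) (hμ : ∀ S : SO 3, μ.map (fun Q => S * Q) = μ)
    (κ : SO 3 → (V₁ →ₗ[ℝ] V₂))
    (f : SO 3 → V₁) (S R : SO 3) :
    so3Conv ρ₁ ρ₂ μ κ (fun Q => (ρ₁ S : V₁ →ₗ[ℝ] V₁) (f (S⁻¹ * Q))) R =
      (ρ₂ S : V₂ →ₗ[ℝ] V₂) (so3Conv ρ₁ ρ₂ μ κ f (S⁻¹ * R)) :=
  have : μ.IsMulLeftInvariant := ⟨hμ⟩
  groupConv_equivariant ρ₁ ρ₂ μ κ f S R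

/-- Equivariance of the group convolution on the compact group `SO(3)` with respect to a
left-invariant Haar measure `μ`: for a continuous kernel `κ` and continuous feature map `f`,
`(κ ⋆ (π₁(S)f))(R) = ρ₂(S)·(κ ⋆ f)(S⁻¹R)`, where `[π₁(S)f](Q) = ρ₁(S) f(S⁻¹Q)`. -/
theorem so3Conv_equivariant
    (ρ₁ : SO 3 →* LinearMap.GeneralLinearGroup ℝ V₁)
    (ρ₂ : SO 3 →* LinearMap.GeneralLinearGroup ℝ V₂)
    (μ : Measure (SO 3)) (hμ : ∀ S : SO 3, μ.map (fun Q => S * Q) = μ)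
    (κ : SO 3 → (V₁ →ₗ[ℝ] V₂)) (hκ : Continuous fun Q => ⇑(κ Q))
    (f : SO 3 → V₁) (hf : Continuous f) (S R : SO 3) :
    so3Conv ρ₁ ρ₂ μ κ (fun Q => (ρ₁ S : V₁ →ₗ[ℝ] V₁) (f (S⁻¹ * Q))) R =
      (ρ₂ S : V₂ →ₗ[ℝ] V₂) (so3Conv ρ₁ ρ₂ μ κ f (S⁻¹ * R)) :=
  so3Conv_equivariant_general ρ₁ ρ₂ μ hμ κ f S R

end
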